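/- Let d ≥ 1 and let f : ℝ_{>0}^d → ℝ be componentwise subadditive and Lebesgue measurable. Let T be either ℝ_{>0} or ℤ_{>0}, and for each i ∈ {1,…,d} let x_i : T → ℝ_{>0} satisfy lim_{t→+∞} x_i(t) = +∞. Then lim_{t→+∞} f(x_1(t),…,x_d(t))/(x_1(t)⋯x_d(t)) exists in ℝ ∪ {−∞} and equals inf_{x_1,…,x_d > 0} f(x_1,…,x_d)/(x_1⋯x_d). -/

import Mathlib

/-!
Measurability enters only through local boundedness. If `f` were unbounded above on a box
`[a, b]` with `a > 0`, pick `w` there with `f w ≥ 2ᵈ n`. Splitting every coordinate of `w` as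
`sᵢ + (wᵢ - sᵢ)` shows that for each `s ∈ (0, a)`, one of the `2ᵈ` points obtained from `s` by
replacing some coordinates `sᵢ` with `wᵢ - sᵢ` lies in `{f ≥ n}`. These replacements preserve
volume, so `vol (0, a) ≤ 2ᵈ vol ({f ≥ n} ∩ (0, b))`, whose right-hand side tends to `0`.

Now let `f ≤ M` on `[a, 2a]`, and write `xᵢ = mᵢ aᵢ + rᵢ` with `rᵢ ∈ [aᵢ, 2aᵢ]`. Iterating
subadditivity coordinatewise gives `f x ≤ (∏ mᵢ) f a + M (∏ (mᵢ + 1) - ∏ mᵢ)`. Dividing by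
`∏ xᵢ`, the limsup of `f x / ∏ xᵢ` is at most `f a / ∏ aᵢ` as all `xᵢ → ∞`. The matching
lower bound holds because every value is at least the infimum.
-/

open Filter Function MeasureTheory Topology

section NatFloor

variable {a x : ℝ}

theorem sub_natFloor_div_sub_one_mul_mem_Icc (ha : 0 < a) (hx : a ≤ x) :
    x - ⌊x / a - 1⌋₊ * a ∈ Set.Icc a (2 * a) := by
  have hz : 0 ≤ x / a - 1 := by rwa [sub_nonneg, one_le_div ha]
  have h₁ := Nat.floor_le hz
  have h₂ := Nat.lt_floor_add_one (x / a - 1)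
  have hxa : x / a * a = x := div_mul_cancel₀ x ha.ne'
  constructor <;> nlinarith

theorem tendsto_natFloor_div_sub_one_div_atTop (ha : 0 < a) :
    Tendsto (fun t : ℝ => (⌊t / a - 1⌋₊ : ℝ) / t) atTop (𝓝 a⁻¹) := by
  have hlower : Tendsto (fun t : ℝ => a⁻¹ - 2 * t⁻¹) atTop (𝓝 a⁻¹) := by
    simpa using (tendsto_const_nhds (x := a⁻¹)).sub (tendsto_inv_atTop_zero.const_mul (2 : ℝ))
  refine tendsto_of_tendsto_of_tendsto_of_le_of_le' hlower tendsto_const_nhds ?_ ?_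
  · filter_upwards [eventually_gt_atTop 0] with t ht
    have := Nat.lt_floor_add_one (t / a - 1)
    have hlin : (a⁻¹ - 2 * t⁻¹) * t = t / a - 2 := by field_simp
    rw [le_div_iff₀ ht, hlin]
    linarith
  · filter_upwards [eventually_ge_atTop a] with t ht
    have := Nat.floor_le (show 0 ≤ t / a - 1 by rwa [sub_nonneg, one_le_div ha])
    rw [div_le_iff₀ (ha.trans_le ht), inv_mul_eq_div]
    linarith

end NatFloor

theorem AEMeasurable.tendsto_measure_setOf_natCast_le_atTop {α : Type*} [MeasurableSpace α]
    {μ : Measure α} [IsFiniteMeasure μ] {g : α → ℝ} (hg : AEMeasurable g μ) :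
    Tendsto (fun n : ℕ => μ {x | n ≤ g x}) atTop (𝓝 0) := by
  have hempty : ⋂ n : ℕ, {x | (n : ℝ) ≤ g x} = ∅ := by
    ext x
    simpa using exists_nat_gt (g x)
  have := tendsto_measure_iInter_atTop (μ := μ) (s := fun n : ℕ => {x | (n : ℝ) ≤ g x})
    (fun _ => hg.nullMeasurableSet_preimage measurableSet_Ici)
    (fun m n hmn x hx => show (m : ℝ) ≤ g x from (Nat.cast_le.2 hmn).trans hx)
    ⟨0, measure_ne_top μ _⟩
  rwa [hempty, measure_empty] at this

theorem measurePreserving_piecewise_sub {ι : Type*} [Fintype ι] [DecidableEq ι] (S : Finset ι)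
    (w : ι → ℝ) :
    MeasurePreserving (fun x : ι → ℝ => S.piecewise x (w - x)) volume volume := by
  have hcoord : ∀ i, MeasurePreserving (fun t : ℝ => if i ∈ S then t else w i - t) := by
    intro i
    by_cases hi : i ∈ S
    · simp only [hi, if_true]
      exact MeasurePreserving.id volume
    · simpa [hi] using Measure.measurePreserving_sub_left volume (w i)
  exact volume_preserving_pi hcoord

def ComponentwiseSubadditive {ι : Type*} [DecidableEq ι] (f : (ι → ℝ) → ℝ) : Prop :=
  ∀ (i : ι) (x : ι → ℝ) (y : ℝ), (∀ j, 0 < x j) → 0 < y →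
    f (update x i (x i + y)) ≤ f x + f (update x i y)

namespace ComponentwiseSubadditive

variable {ι : Type*} [DecidableEq ι] {f : (ι → ℝ) → ℝ}

theorem natCast_mul_add_le (hf : ComponentwiseSubadditive f) {x : ι → ℝ} (hx : ∀ i, 0 < x i)
    (j : ι) {b c : ℝ} (hb : 0 < b) (hc : 0 < c) (m : ℕ) :
    f (update x j (m * b + c)) ≤ m * f (update x j b) + f (update x j c) := by
  induction m with
  | zero => simp
  | succ m ih =>
    have hpos : ∀ i, 0 < update x j (m * b + c) i :=
      (forall_update_iff x fun _ t => 0 < t).2 ⟨by positivity, fun i _ => hx i⟩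
    have hstep := hf j _ b hpos hb
    simp only [update_idem, update_self] at hstep
    push_cast
    rw [add_mul, one_mul, add_right_comm]
    linarith

theorem le_sum_powerset_piecewise (hf : ComponentwiseSubadditive f) (m : ι → ℕ) {a r : ι → ℝ}
    (ha : ∀ i, 0 < a i) (hr : ∀ i, 0 < r i) (T : Finset ι) {z : ι → ℝ} (hz : ∀ i, 0 < z i) :
    f (T.piecewise (fun i => m i * a i + r i) z) ≤
      ∑ S ∈ T.powerset, (∏ i ∈ S, (m i : ℝ)) * f (S.piecewise a (T.piecewise r z)) := by
  induction T using Finset.induction_on generalizing z with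
  | empty => simp
  | insert j T hj ih =>
    have hpos : ∀ i, 0 < T.piecewise (fun i => m i * a i + r i) z i := fun i =>
      T.piecewise_cases (fun i => (m i : ℝ) * a i + r i) z (fun t => 0 < t)
        (by have := ha i; have := hr i; positivity) (hz i)
    have hupd : ∀ {t}, 0 < t → ∀ i, 0 < update z j t i := fun ht =>
      (forall_update_iff z fun _ t => 0 < t).2 ⟨ht, fun i _ => hz i⟩
    have hsplit := hf.natCast_mul_add_le hpos j (ha j) (hr j) (m j)
    simp only [Finset.update_piecewise_of_notMem _ _ _ hj] at hsplit
    have hr_side : (insert j T).piecewise r z = T.piecewise r (update z j (r j)) := by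
      rw [Finset.piecewise_insert, Finset.update_piecewise_of_notMem _ _ _ hj]
    rw [Finset.piecewise_insert, Finset.update_piecewise_of_notMem _ _ _ hj,
      Finset.sum_powerset_insert hj, hr_side]
    refine hsplit.trans ((add_le_add ?_ (ih (hupd (hr j)))).trans_eq (add_comm _ _))
    calc (m j : ℝ) * f (T.piecewise (fun i => m i * a i + r i) (update z j (a j)))
        ≤ m j * ∑ S ∈ T.powerset,
            (∏ i ∈ S, (m i : ℝ)) * f (S.piecewise a (T.piecewise r (update z j (a j)))) :=
          mul_le_mul_of_nonneg_left (ih (hupd (ha j))) (Nat.cast_nonneg _)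
      _ = _ := by
          rw [Finset.mul_sum]
          refine Finset.sum_congr rfl fun S hS => ?_
          have hjS : j ∉ S := fun h => hj (Finset.mem_powerset.1 hS h)
          rw [Finset.prod_insert hjS, Finset.piecewise_insert,
            Finset.update_piecewise_of_notMem _ _ _ hjS,
            Finset.update_piecewise_of_notMem _ _ _ hj, update_idem, mul_assoc]

variable [Fintype ι]

theorem le_sum_powerset (hf : ComponentwiseSubadditive f) (m : ι → ℕ) {a r : ι → ℝ}
    (ha : ∀ i, 0 < a i) (hr : ∀ i, 0 < r i) :
    f (fun i => m i * a i + r i) ≤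
      ∑ S ∈ Finset.univ.powerset, (∏ i ∈ S, (m i : ℝ)) * f (S.piecewise a r) := by
  simpa using hf.le_sum_powerset_piecewise m ha hr Finset.univ hr

theorem exists_le_apply_piecewise (hf : ComponentwiseSubadditive f) {s w : ι → ℝ}
    (hs : ∀ i, 0 < s i) (hsw : ∀ i, s i < w i) {c : ℝ} (hc : 2 ^ Fintype.card ι * c ≤ f w) :
    ∃ S : Finset ι, c ≤ f (S.piecewise s (w - s)) := by
  have hsplit := hf.le_sum_powerset (fun _ => 1) hs (r := w - s) fun i => sub_pos.2 (hsw i)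
  simp only [Nat.cast_one, one_mul, Finset.prod_const_one, Pi.sub_apply, add_sub_cancel] at hsplit
  obtain ⟨S, -, hS⟩ := Finset.exists_le_of_sum_le (Finset.univ_nonempty (α := Finset ι))
    (f := fun _ => c) (g := fun S => f (S.piecewise s (w - s)))
    (by simpa [Finset.card_univ, mul_comm] using hc.trans hsplit)
  exact ⟨S, hS⟩

theorem bddAbove_image_Icc (hf : ComponentwiseSubadditive f)
    (hmeas : AEMeasurable f (volume.restrict {x | ∀ i, 0 < x i})) {a : ι → ℝ}
    (ha : ∀ i, 0 < a i) (b : ι → ℝ) : BddAbove (f '' Set.Icc a b) := by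
  by_contra hunb
  set U : Set (ι → ℝ) := Set.univ.pi fun i => Set.Ioo 0 (b i)
  set V : Set (ι → ℝ) := Set.univ.pi fun i => Set.Ioo 0 (a i)
  have hU : MeasurableSet U := MeasurableSet.univ_pi fun _ => measurableSet_Ioo
  have : IsFiniteMeasure (volume.restrict U) := isFiniteMeasure_restrict.2 <| by
    rw [Real.volume_pi_Ioo]
    exact ENNReal.prod_ne_top fun _ _ => ENNReal.ofReal_ne_top
  have hsmall := (hmeas.mono_set fun x hx i => (hx i trivial).1 : AEMeasurable f
    (volume.restrict U)).tendsto_measure_setOf_natCast_le_atTop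
  have hcover : ∀ n : ℕ,
      volume V ≤ 2 ^ Fintype.card ι * volume.restrict U {x | n ≤ f x} := by
    intro n
    obtain ⟨_, ⟨w, hw, rfl⟩, hwn⟩ := not_bddAbove_iff.1 hunb (2 ^ Fintype.card ι * n)
    have hV : V ⊆ ⋃ S ∈ Finset.univ.powerset,
        (fun x => S.piecewise x (w - x)) ⁻¹' ({x | n ≤ f x} ∩ U) := by
      intro s hs
      have hs0 i : 0 < s i := (hs i trivial).1
      have hsw i : s i < w i := (hs i trivial).2.trans_le (hw.1 i)
      obtain ⟨S, hS⟩ := hf.exists_le_apply_piecewise hs0 hsw hwn.le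
      refine Set.mem_biUnion (Finset.mem_powerset.2 (Finset.subset_univ S)) ⟨hS, fun i _ => ?_⟩
      refine S.piecewise_cases s (w - s) (· ∈ Set.Ioo 0 (b i)) ⟨hs0 i, ?_⟩ ?_
      · exact (hsw i).trans_le (hw.2 i)
      · simp only [Pi.sub_apply, Set.mem_Ioo, sub_pos]
        exact ⟨hsw i, by linarith [hs0 i, hw.2 i]⟩
    calc volume V
        ≤ ∑ S ∈ Finset.univ.powerset,
            volume ((fun x => S.piecewise x (w - x)) ⁻¹' ({x | n ≤ f x} ∩ U)) :=
          (measure_mono hV).trans (measure_biUnion_finset_le _ _)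
      _ ≤ ∑ S ∈ Finset.univ.powerset, volume.restrict U {x | n ≤ f x} :=
          Finset.sum_le_sum fun S _ => by
            rw [Measure.restrict_apply' hU]
            exact (measurePreserving_piecewise_sub S w).measure_preimage_le _
      _ = _ := by simp
  have hV0 : volume V = 0 := le_antisymm (ge_of_tendsto' (by
    simpa using ENNReal.Tendsto.const_mul hsmall (Or.inr (by simp))) hcover) zero_le
  rw [Real.volume_pi_Ioo] at hV0
  obtain ⟨i, hi⟩ : ∃ i, a i ≤ 0 := by simpa [Finset.prod_eq_zero_iff] using hV0
  exact (ha i).not_ge hi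

theorem le_of_forall_mem_Icc_le (hf : ComponentwiseSubadditive f) {a x : ι → ℝ}
    (ha : ∀ i, 0 < a i) {M : ℝ} (hM : ∀ z ∈ Set.Icc a (2 * a), f z ≤ M) (hax : a ≤ x) :
    f x ≤ (∏ i, (⌊x i / a i - 1⌋₊ : ℝ)) * f a +
      M * (∏ i, ((⌊x i / a i - 1⌋₊ : ℝ) + 1) - ∏ i, (⌊x i / a i - 1⌋₊ : ℝ)) := by
  set m : ι → ℕ := fun i => ⌊x i / a i - 1⌋₊
  set r : ι → ℝ := fun i => x i - m i * a i
  have hr i : r i ∈ Set.Icc (a i) (2 * a i) := sub_natFloor_div_sub_one_mul_mem_Icc (ha i) (hax i)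
  have hexp := hf.le_sum_powerset m ha fun i => (ha i).trans_le (hr i).1
  simp only [r, add_sub_cancel] at hexp
  have hbox : ∀ S : Finset ι, f (S.piecewise a r) ≤ if S = Finset.univ then f a else M := by
    intro S
    split_ifs with hS
    · rw [hS, Finset.piecewise_univ]
    · refine hM _ ⟨fun i => S.piecewise_cases a r (a i ≤ ·) le_rfl (hr i).1, fun i => ?_⟩
      refine S.piecewise_cases a r (· ≤ 2 * a i) (by linarith [ha i]) (hr i).2
  have hsum : ∑ S ∈ Finset.univ.powerset, ∏ i ∈ S, (m i : ℝ) = ∏ i, ((m i : ℝ) + 1) :=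
    (Finset.prod_add_one _).symm
  rw [← Finset.add_sum_erase _ _ (Finset.mem_powerset_self _)] at hsum
  calc f x
      ≤ ∑ S ∈ Finset.univ.powerset, (∏ i ∈ S, (m i : ℝ)) * f (S.piecewise a r) := hexp
    _ ≤ ∑ S ∈ Finset.univ.powerset,
          (∏ i ∈ S, (m i : ℝ)) * (if S = Finset.univ then f a else M) :=
        Finset.sum_le_sum fun S _ =>
          mul_le_mul_of_nonneg_left (hbox S) (Finset.prod_nonneg fun _ _ => Nat.cast_nonneg _)
    _ = _ := by
        rw [← Finset.add_sum_erase _ _ (Finset.mem_powerset_self _), if_pos rfl, ← hsum,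
          add_sub_cancel_left, Finset.mul_sum]
        congr 1
        refine Finset.sum_congr rfl fun S hS => ?_
        rw [if_neg (Finset.ne_of_mem_erase hS), mul_comm]

theorem eventually_div_prod_lt (hf : ComponentwiseSubadditive f)
    (hmeas : AEMeasurable f (volume.restrict {x | ∀ i, 0 < x i})) {a : ι → ℝ}
    (ha : ∀ i, 0 < a i) {c : ℝ} (hc : f a / ∏ i, a i < c) :
    ∀ᶠ x in Filter.pi fun _ => atTop, f x / ∏ i, x i < c := by
  obtain ⟨M, hM⟩ := hf.bddAbove_image_Icc hmeas ha (2 * a)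
  set l : Filter (ι → ℝ) := Filter.pi fun _ => atTop
  set p : (ι → ℝ) → ι → ℝ := fun x i => (⌊x i / a i - 1⌋₊ : ℝ) / x i
  set q : (ι → ℝ) → ι → ℝ := fun x i => ((⌊x i / a i - 1⌋₊ : ℝ) + 1) / x i
  have hp i : Tendsto (p · i) l (𝓝 (a i)⁻¹) :=
    (tendsto_natFloor_div_sub_one_div_atTop (ha i)).comp (tendsto_eval_pi _ i)
  have hq i : Tendsto (q · i) l (𝓝 (a i)⁻¹) := by
    have := (hp i).add (tendsto_inv_atTop_zero.comp (tendsto_eval_pi _ i))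
    rw [add_zero] at this
    exact this.congr fun x => by simp only [p, q, comp_apply, eval, add_div, one_div]
  have hlim : Tendsto (fun x => (∏ i, p x i) * f a + M * (∏ i, q x i - ∏ i, p x i)) l
      (𝓝 (f a / ∏ i, a i)) := by
    have := ((tendsto_finsetProd Finset.univ fun i _ => hp i).mul_const (f a)).add
      (((tendsto_finsetProd Finset.univ fun i _ => hq i).sub
        (tendsto_finsetProd Finset.univ fun i _ => hp i)).const_mul M)
    simpa [Finset.prod_inv_distrib, div_eq_inv_mul] using this
  have hbound : ∀ᶠ x in l,
      f x / ∏ i, x i ≤ (∏ i, p x i) * f a + M * (∏ i, q x i - ∏ i, p x i) := by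
    filter_upwards [eventually_all.2 fun i => (tendsto_eval_pi _ i).eventually_ge_atTop (a i)]
      with x hx
    have hprod : 0 < ∏ i, x i := Finset.prod_pos fun i _ => (ha i).trans_le (hx i)
    have := hf.le_of_forall_mem_Icc_le ha (fun z hz => hM ⟨z, hz, rfl⟩) hx
    simp only [p, q, Finset.prod_div_distrib]
    rw [div_le_iff₀ hprod]
    refine this.trans_eq ?_
    field_simp
  filter_upwards [hbound, hlim.eventually (gt_mem_nhds hc)] with x h₁ h₂ using h₁.trans_lt h₂

theorem tendsto_div_prod_iInf (hf : ComponentwiseSubadditive f)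
    (hmeas : AEMeasurable f (volume.restrict {x | ∀ i, 0 < x i})) :
    Tendsto (fun x : ι → ℝ => ((f x / ∏ i, x i : ℝ) : EReal)) (Filter.pi fun _ => atTop)
      (𝓝 (⨅ x ∈ {x : ι → ℝ | ∀ i, 0 < x i}, ((f x / ∏ i, x i : ℝ) : EReal))) := by
  refine tendsto_order.2 ⟨fun b hb => ?_, fun b hb => ?_⟩
  · filter_upwards [eventually_all.2 fun i => (tendsto_eval_pi _ i).eventually_gt_atTop 0]
      with x hx
    exact hb.trans_le (iInf₂_le x hx)
  · obtain ⟨a, ha, hab⟩ : ∃ a ∈ {x : ι → ℝ | ∀ i, 0 < x i},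
        ((f a / ∏ i, a i : ℝ) : EReal) < b := by
      simpa only [iInf_lt_iff, exists_prop] using hb
    obtain ⟨c, hac, hcb⟩ := EReal.lt_iff_exists_real_btwn.1 hab
    filter_upwards [hf.eventually_div_prod_lt hmeas ha (EReal.coe_lt_coe_iff.1 hac)] with x hx
    exact (EReal.coe_lt_coe_iff.2 hx).trans hcb

end ComponentwiseSubadditive

theorem fekete_lemma_along_curves_general
    (d : ℕ) (f : (Fin d → ℝ) → ℝ)
    (hf : ∀ (i : Fin d) (x : Fin d → ℝ) (y : ℝ), (∀ j, 0 < x j) → 0 < y →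
      f (Function.update x i (x i + y)) ≤ f x + f (Function.update x i y))
    (hmeas : AEMeasurable f (volume.restrict {x : Fin d → ℝ | ∀ i, 0 < x i}))
    (u : Fin d → ℝ → ℝ)
    (hu : ∀ i, Tendsto (u i) atTop atTop)
    (v : Fin d → ℕ → ℝ)
    (hv : ∀ i, Tendsto (v i) atTop atTop) :
    Tendsto (fun t : ℝ => ((f (fun i => u i t) / ∏ i, u i t : ℝ) : EReal)) atTop
      (𝓝 (⨅ x ∈ {x : Fin d → ℝ | ∀ i, 0 < x i},
        ((f x / ∏ i, x i : ℝ) : EReal))) ∧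
    Tendsto (fun n : ℕ => ((f (fun i => v i n) / ∏ i, v i n : ℝ) : EReal)) atTop
      (𝓝 (⨅ x ∈ {x : Fin d → ℝ | ∀ i, 0 < x i},
        ((f x / ∏ i, x i : ℝ) : EReal))) :=
  have hlim := ComponentwiseSubadditive.tendsto_div_prod_iInf hf hmeas
  ⟨hlim.comp (tendsto_pi.2 hu), hlim.comp (tendsto_pi.2 hv)⟩

/-- Let `f` be componentwise subadditive and Lebesgue measurable on the positive
orthant of `ℝ^d`, and for each coordinate `i` let `t ↦ uᵢ t` (with `t` ranging over
the positive reals) and `n ↦ vᵢ n` (with `n` ranging over the positive integers) be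
positive-valued functions tending to `+∞`.  Then
`f(u₁(t),…,u_d(t))/(u₁(t)⋯u_d(t))` converges as `t → +∞`, in `ℝ ∪ {−∞}`, to
`inf_{x₁,…,x_d > 0} f(x₁,…,x_d)/(x₁⋯x_d)`, and likewise along the positive
integers. -/
theorem fekete_lemma_along_curves
    (d : ℕ) (hd : 1 ≤ d) (f : (Fin d → ℝ) → ℝ)
    (hf : ∀ (i : Fin d) (x : Fin d → ℝ) (y : ℝ), (∀ j, 0 < x j) → 0 < y →
      f (Function.update x i (x i + y)) ≤ f x + f (Function.update x i y))
    (hmeas : AEMeasurable f (volume.restrict {x : Fin d → ℝ | ∀ i, 0 < x i}))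
    (u : Fin d → ℝ → ℝ) (hupos : ∀ i t, 0 < t → 0 < u i t)
    (hu : ∀ i, Tendsto (u i) atTop atTop)
    (v : Fin d → ℕ → ℝ) (hvpos : ∀ i n, 0 < n → 0 < v i n)
    (hv : ∀ i, Tendsto (v i) atTop atTop) :
    Tendsto (fun t : ℝ => ((f (fun i => u i t) / ∏ i, u i t : ℝ) : EReal)) atTop
      (𝓝 (⨅ x ∈ {x : Fin d → ℝ | ∀ i, 0 < x i},
        ((f x / ∏ i, x i : ℝ) : EReal))) ∧
    Tendsto (fun n : ℕ => ((f (fun i => v i n) / ∏ i, v i n : ℝ) : EReal)) atTop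
      (𝓝 (⨅ x ∈ {x : Fin d → ℝ | ∀ i, 0 < x i},
        ((f x / ∏ i, x i : ℝ) : EReal))) :=
  fekete_lemma_along_curves_general d f hf hmeas u hu v hv
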